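/- Let n be a positive integer. The map X ↦ top(X) restricts to a bijection from 𝒮(n) := {X ∈ 𝒯(n) : the projective arc at the residue class of n belongs to X} onto 𝒴(n) := {a ∈ 𝒵(n) : a'_i ≤ 0 for all i ∈ {1, …, n}}. (Combinatorial content of Adachi, Corollary 2.15: bijection between triangulations containing the projective arc at n and sequences with nonpositive partial sums.) -/
import Mathlib


/-!
Combinatorial model of admissible arcs and triangulations of a regular
`n`-gon with one puncture (following Adachi, "The classification of
τ-tilting modules over Nakayama algebras").
-/

namespace Punctured

/-- Admissible arcs in a regular `n`-gon with one puncture: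
an *inner arc* `inner i t` runs counterclockwise from vertex `i` to vertex
`i + t` (with `2 ≤ t ≤ n` required for admissibility); a *projective arc*
`proj j` runs from the puncture to the vertex `j`. -/
inductive Arc (n : ℕ) : Type
  | inner (i : ZMod n) (t : ℕ) : Arc n
  | proj (j : ZMod n) : Arc n

namespace Arc

/-- The terminal point of an admissible arc. -/
def terminal {n : ℕ} : Arc n → ZMod n
  | .inner i t => i + (t : ZMod n)
  | .proj j => j

/-- Admissibility: inner arcs must have length `2 ≤ t ≤ n`. -/
def IsAdmissible {n : ℕ} : Arc n → Prop
  | .inner _ t => 2 ≤ t ∧ t ≤ n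
  | .proj _ => True

/-- Compatibility (non-crossing) of two admissible arcs, defined via
lifts to `ℤ`. -/
def Compatible {n : ℕ} : Arc n → Arc n → Prop
  | .inner i t, .inner k s =>
      ¬ ∃ x y : ℤ, (x : ZMod n) = i ∧ (y : ZMod n) = k ∧
        ((x < y ∧ y < x + (t : ℤ) ∧ x + (t : ℤ) < y + (s : ℤ)) ∨
         (y < x ∧ x < y + (s : ℤ) ∧ y + (s : ℤ) < x + (t : ℤ)))
  | .inner i t, .proj j =>
      ¬ ∃ x y : ℤ, (x : ZMod n) = i ∧ (y : ZMod n) = j ∧ x < y ∧ y < x + (t : ℤ)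
  | .proj j, .inner i t =>
      ¬ ∃ x y : ℤ, (x : ZMod n) = i ∧ (y : ZMod n) = j ∧ x < y ∧ y < x + (t : ℤ)
  | .proj _, .proj _ => True

end Arc

/-- A set of admissible arcs which is pairwise compatible. -/
def PairwiseCompatible (n : ℕ) (X : Set (Arc n)) : Prop :=
  (∀ a ∈ X, a.IsAdmissible) ∧ ∀ a ∈ X, ∀ b ∈ X, a.Compatible b

/-- A triangulation of the punctured `n`-gon: a pairwise compatible set of
admissible arcs, maximal under inclusion among such sets. -/
def IsTriangulation (n : ℕ) (X : Set (Arc n)) : Prop :=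
  PairwiseCompatible n X ∧
    ∀ Y : Set (Arc n), PairwiseCompatible n Y → X ⊆ Y → Y = X

/-- `top(X)`: for each residue class `c`, the number of arcs of `X` with
terminal point `c`. -/
noncomputable def topSeq (n : ℕ) (X : Set (Arc n)) : ZMod n → ℕ :=
  fun c => {arc ∈ X | Arc.terminal arc = c}.ncard

/-- The representative of `p` modulo `n` lying in `{1, …, n}`. -/
def resRep (n : ℕ) (p : ℤ) : ℕ := ((p - 1) % (n : ℤ)).toNat + 1

/-- `a'_p := Σ_{j=1}^{(p)_n} (a_j - 1)`, the `n`-periodic extension of the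
partial-sum sequence of `a`. -/
def psum (n : ℕ) (a : ZMod n → ℕ) (p : ℤ) : ℤ :=
  ∑ j ∈ Finset.Icc 1 (resRep n p), ((a ((j : ℕ) : ZMod n) : ℤ) - 1)

/-- `‖a'‖ := max {a'_1, …, a'_n}`. -/
noncomputable def pnorm (n : ℕ) (a : ZMod n → ℕ) : ℤ :=
  sSup ((fun i : ℕ => psum n a (i : ℤ)) '' Set.Icc 1 n)

/-- `δ_p = 1` if `a'_p = ‖a'‖` and `δ_p = 0` otherwise. -/
noncomputable def deltaInt (n : ℕ) (a : ZMod n → ℕ) (p : ℤ) : ℤ :=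
  if psum n a p = pnorm n a then 1 else 0

/-- `k_s^j := max {k ∈ ℤ : k < j - 1 and a'_k = a'_{j-1} + s}`. -/
noncomputable def kmax (n : ℕ) (a : ZMod n → ℕ) (j s : ℤ) : ℤ :=
  sSup {k : ℤ | k < j - 1 ∧ psum n a k = psum n a (j - 1) + s}

/-- `ℓ_j(a)`. -/
noncomputable def ellj (n : ℕ) (a : ZMod n → ℕ) (j : ℕ) : ℤ :=
  if (a ((j : ℕ) : ZMod n) : ℤ) - deltaInt n a (j : ℤ) = 0 then 0
  else (j : ℤ) - kmax n a (j : ℤ) ((a ((j : ℕ) : ZMod n) : ℤ) - deltaInt n a (j : ℤ))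

namespace Core

def IsChord (p q : ℤ) (c : ℤ × ℤ) : Prop := p ≤ c.1 ∧ c.1 + 2 ≤ c.2 ∧ c.2 ≤ q

def Cross (c d : ℤ × ℤ) : Prop :=
  (c.1 < d.1 ∧ d.1 < c.2 ∧ c.2 < d.2) ∨ (d.1 < c.1 ∧ c.1 < d.2 ∧ d.2 < c.2)

def MaxNC (p q : ℤ) (T : Set (ℤ × ℤ)) : Prop :=
  (∀ c ∈ T, IsChord p q c) ∧ (∀ c ∈ T, ∀ d ∈ T, ¬ Cross c d) ∧
  (∀ e, IsChord p q e → (∀ c ∈ T, ¬ Cross e c) → e ∈ T)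

noncomputable def chordTop (T : Set (ℤ × ℤ)) : ℤ → ℕ := fun v => {c ∈ T | c.2 = v}.ncard

def GoodSeq (p q : ℤ) : Set (ℤ → ℕ) :=
  {b | (∀ v, v ∉ Set.Ioc p q → b v = 0) ∧
    (∀ w ∈ Set.Ioc p q, (∑ v ∈ Finset.Ioc p w, (b v : ℤ)) ≤ w - p - 1) ∧
    (∑ v ∈ Finset.Ioc p q, (b v : ℤ)) = q - p - 1}

lemma finite_of_chords {p q : ℤ} {T : Set (ℤ × ℤ)} (h : ∀ c ∈ T, IsChord p q c) :
    T.Finite := by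
  apply Set.Finite.subset (Set.Finite.prod (Set.finite_Icc p q) (Set.finite_Icc p q))
  intro c hc
  have := h c hc
  simp only [IsChord] at this
  constructor <;> simp [Set.mem_Icc] <;> omega

lemma topChord_mem {p q : ℤ} {T : Set (ℤ × ℤ)} (h : MaxNC p q T) (hpq : p + 2 ≤ q) :
    (p, q) ∈ T := by
  apply h.2.2
  · exact ⟨le_refl _, hpq, le_refl _⟩
  · intro c hc
    have := h.1 c hc
    simp only [IsChord] at this
    simp only [Cross]
    push_neg
    omega

lemma chordTop_eq_zero {p q : ℤ} {T : Set (ℤ × ℤ)} (h : ∀ c ∈ T, IsChord p q c)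
    {v : ℤ} (hv : v ∉ Set.Ioc p q) : chordTop T v = 0 := by
  unfold chordTop
  convert Set.ncard_empty (ℤ × ℤ)
  ext c
  simp only [Set.mem_setOf_eq, Set.mem_empty_iff_false, iff_false, not_and, Set.mem_sep_iff]
  intro hc hcv
  have := h c hc
  simp only [IsChord] at this
  simp only [Set.mem_Ioc] at hv
  omega

/-- counting identity for a disjoint decomposition -/
lemma chordTop_insert_union {p w q : ℤ} {T₁ T₂ : Set (ℤ × ℤ)} (hpw : p < w) (hwq : w < q)
    (h1 : ∀ c ∈ T₁, IsChord p w c) (h2 : ∀ c ∈ T₂, IsChord w q c) :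
    ∀ v, chordTop (insert (p, q) (T₁ ∪ T₂)) v
      = chordTop T₁ v + chordTop T₂ v + (if v = q then 1 else 0) := by
  intro v
  have hf1 : T₁.Finite := finite_of_chords h1
  have hf2 : T₂.Finite := finite_of_chords h2
  have hdisj : Disjoint {c ∈ T₁ | c.2 = v} {c ∈ T₂ | c.2 = v} := by
    rw [Set.disjoint_left]
    rintro c ⟨hc1, -⟩ ⟨hc2, -⟩
    have := h1 c hc1; have := h2 c hc2
    simp only [IsChord] at *
    omega
  have hunion : {c ∈ (T₁ ∪ T₂ : Set (ℤ × ℤ)) | c.2 = v}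
      = {c ∈ T₁ | c.2 = v} ∪ {c ∈ T₂ | c.2 = v} := by
    ext c; simp only [Set.mem_sep_iff, Set.mem_union, Set.mem_setOf_eq]; tauto
  have hcard : chordTop (T₁ ∪ T₂) v = chordTop T₁ v + chordTop T₂ v := by
    unfold chordTop
    rw [hunion, Set.ncard_union_eq hdisj (hf1.subset (Set.sep_subset _ _))
      (hf2.subset (Set.sep_subset _ _))]
  rcases eq_or_ne v q with hv | hv
  · have hset : {c ∈ insert (p, q) (T₁ ∪ T₂) | c.2 = v}
        = insert (p, q) {c ∈ (T₁ ∪ T₂ : Set (ℤ × ℤ)) | c.2 = v} := by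
      ext c
      simp only [Set.mem_sep_iff, Set.mem_insert_iff]
      constructor
      · rintro ⟨hc | hc, h2⟩
        · exact Or.inl hc
        · exact Or.inr ⟨hc, h2⟩
      · rintro (hc | ⟨hc, h2⟩)
        · exact ⟨Or.inl hc, by rw [hc, hv]⟩
        · exact ⟨Or.inr hc, h2⟩
    have hnm : (p, q) ∉ {c ∈ (T₁ ∪ T₂ : Set (ℤ × ℤ)) | c.2 = v} := by
      rintro ⟨hc, -⟩
      rcases hc with hc | hc
      · have := h1 _ hc; simp only [IsChord] at this; omega
      · have := h2 _ hc; simp only [IsChord] at this; omega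
    have hfin : {c ∈ (T₁ ∪ T₂ : Set (ℤ × ℤ)) | c.2 = v}.Finite :=
      Set.Finite.subset (hf1.union hf2) (Set.sep_subset _ _)
    unfold chordTop
    rw [hset, Set.ncard_insert_of_notMem hnm hfin, if_pos hv]
    have := hcard; unfold chordTop at this; omega
  · have hset : {c ∈ insert (p, q) (T₁ ∪ T₂) | c.2 = v}
        = {c ∈ (T₁ ∪ T₂ : Set (ℤ × ℤ)) | c.2 = v} := by
      ext c
      simp only [Set.mem_sep_iff, Set.mem_insert_iff]
      constructor
      · rintro ⟨hc | hc, h2⟩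
        · exfalso; apply hv; rw [← h2, hc]
        · exact ⟨hc, h2⟩
      · rintro ⟨hc, h2⟩; exact ⟨Or.inr hc, h2⟩
    unfold chordTop
    rw [hset, if_neg hv]
    have := hcard; unfold chordTop at this; omega


lemma cross_symm {c d : ℤ × ℤ} (h : Cross c d) : Cross d c := by
  unfold Cross at *; tauto

lemma glue {p w q : ℤ} {T₁ T₂ : Set (ℤ × ℤ)} (hpw : p < w) (hwq : w < q)
    (h1 : MaxNC p w T₁) (h2 : MaxNC w q T₂) :
    MaxNC p q (insert (p, q) (T₁ ∪ T₂)) := by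
  have hall : ∀ c ∈ insert (p, q) (T₁ ∪ T₂), IsChord p q c := by
    rintro c (rfl | hc | hc)
    · exact ⟨le_refl _, by simp only [Prod.fst, Prod.snd]; omega, le_refl _⟩
    · have := h1.1 c hc; exact ⟨this.1, this.2.1, by have := this.2.2; omega⟩
    · have := h2.1 c hc; exact ⟨by have := this.1; omega, this.2.1, this.2.2⟩
  have nest : ∀ c : ℤ × ℤ, IsChord p q c → ¬ Cross c (p, q) := by
    rintro c ⟨a1, a2, a3⟩
    simp only [Cross, Prod.fst, Prod.snd]; push_neg; omega
  have sep : ∀ c d : ℤ × ℤ, IsChord p w c → IsChord w q d → ¬ Cross c d := by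
    rintro c d ⟨a1, a2, a3⟩ ⟨b1, b2, b3⟩
    simp only [Cross]; push_neg; omega
  refine ⟨hall, ?_, ?_⟩
  · rintro c hc d hd
    rcases hd with rfl | hd | hd
    · exact nest c (hall c hc)
    · rcases hc with rfl | hc | hc
      · intro h; exact nest d (hall d (Or.inr (Or.inl hd))) (cross_symm h)
      · exact h1.2.1 c hc d hd
      · intro h; exact sep d c (h1.1 d hd) (h2.1 c hc) (cross_symm h)
    · rcases hc with rfl | hc | hc
      · intro h; exact nest d (hall d (Or.inr (Or.inr hd))) (cross_symm h)
      · exact sep c d (h1.1 c hc) (h2.1 d hd)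
      · exact h2.2.1 c hc d hd
  · intro e he hcompat
    rcases le_or_gt e.2 w with h' | h'
    · have : e ∈ T₁ := by
        apply h1.2.2 e ⟨he.1, he.2.1, h'⟩
        intro c hc
        exact hcompat c (Or.inr (Or.inl hc))
      exact Or.inr (Or.inl this)
    rcases le_or_gt w e.1 with h'' | h''
    · have : e ∈ T₂ := by
        apply h2.2.2 e ⟨h'', he.2.1, he.2.2⟩
        intro c hc
        exact hcompat c (Or.inr (Or.inr hc))
      exact Or.inr (Or.inr this)
    -- e.1 < w < e.2 : show e = (p, q)
    have he1 : e.1 = p := by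
      by_contra hne
      have hgt : p < e.1 := lt_of_le_of_ne he.1 (Ne.symm hne)
      have hw2 : p + 2 ≤ w := by omega
      have hmem : (p, w) ∈ T₁ := topChord_mem h1 hw2
      apply hcompat (p, w) (Or.inr (Or.inl hmem))
      right; simp only [Prod.fst, Prod.snd]; exact ⟨hgt, h'', h'⟩
    have he2 : e.2 = q := by
      by_contra hne
      have hlt : e.2 < q := lt_of_le_of_ne he.2.2 hne
      have hw2 : w + 2 ≤ q := by omega
      have hmem : (w, q) ∈ T₂ := topChord_mem h2 hw2
      apply hcompat (w, q) (Or.inr (Or.inr hmem))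
      left; simp only [Prod.fst, Prod.snd]; exact ⟨h'', h', hlt⟩
    left
    exact Prod.ext he1 he2

lemma decomp {p q : ℤ} {T : Set (ℤ × ℤ)} (hT : MaxNC p q T) (hpq : p + 2 ≤ q) :
    ∃ w, p < w ∧ w < q ∧ MaxNC p w {c ∈ T | c.2 ≤ w} ∧ MaxNC w q {c ∈ T | w ≤ c.1} ∧
      T = insert (p, q) ({c ∈ T | c.2 ≤ w} ∪ {c ∈ T | w ≤ c.1}) := by
  classical
  have hpqT : (p, q) ∈ T := topChord_mem hT hpq
  set P : ℤ → Prop := fun v => p < v ∧ v < q ∧ ((v, q) ∈ T ∨ v = q - 1) with hP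
  obtain ⟨w, hwP, hleast⟩ := Int.exists_least_of_bdd (P := P)
    ⟨p, fun z hz => le_of_lt hz.1⟩ ⟨q - 1, by refine ⟨by omega, by omega, Or.inr rfl⟩⟩
  obtain ⟨hw1, hw2, hw3⟩ := hwP
  refine ⟨w, hw1, hw2, ?_⟩
  -- Step 1 : (p, w) ∈ T or w = p + 1
  have step1 : w = p + 1 ∨ (p, w) ∈ T := by
    rcases eq_or_lt_of_le (by omega : p + 1 ≤ w) with h | h
    · exact Or.inl h.symm
    right
    apply hT.2.2 (p, w) ⟨le_refl _, by simp only [Prod.fst, Prod.snd]; omega, by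
      simp only [Prod.snd]; omega⟩
    intro c hc
    intro hcross
    obtain ⟨hc1, hc2, hc3⟩ := hT.1 c hc
    have hx : p < c.1 ∧ c.1 < w ∧ w < c.2 := by
      rcases hcross with ⟨u1, u2, u3⟩ | ⟨u1, u2, u3⟩
      · simp only [Prod.fst, Prod.snd] at u1 u2 u3; exact ⟨u1, u2, u3⟩
      · exfalso; simp only [Prod.fst, Prod.snd] at u1 u2 u3; omega
    rcases eq_or_lt_of_le hc3 with hy | hy
    · -- c.2 = q : contradicts minimality of w
      have hcmem : (c.1, q) ∈ T := by rw [← hy, Prod.mk.eta]; exact hc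
      have := hleast c.1 ⟨hx.1, by omega, Or.inl hcmem⟩
      omega
    · rcases hw3 with hwT | hwq1
      · exact hT.2.1 c hc (w, q) hwT
          (Or.inl (by simp only [Prod.fst, Prod.snd]; exact ⟨hx.2.1, hx.2.2, hy⟩))
      · omega
  -- Step 2 : trichotomy
  have step2 : ∀ c ∈ T, c.2 ≤ w ∨ w ≤ c.1 ∨ c = (p, q) := by
    intro c hc
    by_contra hcon
    push_neg at hcon
    obtain ⟨hA, hB, hC⟩ := hcon
    obtain ⟨hc1, hc2, hc3⟩ := hT.1 c hc
    rcases eq_or_lt_of_le hc1 with hx | hx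
    · -- c.1 = p
      rcases eq_or_lt_of_le hc3 with hy | hy
      · exact hC (Prod.ext hx.symm hy)
      rcases hw3 with hwT | hwq1
      · exact hT.2.1 c hc (w, q) hwT
          (Or.inl (by simp only [Prod.fst, Prod.snd]; exact ⟨hB, hA, hy⟩))
      · omega
    · rcases step1 with h | h
      · omega
      · exact hT.2.1 c hc (p, w) h
          (Or.inr (by simp only [Prod.fst, Prod.snd]; exact ⟨hx, hB, hA⟩))
  -- Step 3: maximality of the two halves
  have hmax1 : MaxNC p w {c ∈ T | c.2 ≤ w} := by
    refine ⟨?_, ?_, ?_⟩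
    · rintro c ⟨hc, hcw⟩
      exact ⟨(hT.1 c hc).1, (hT.1 c hc).2.1, hcw⟩
    · rintro c ⟨hc, -⟩ d ⟨hd, -⟩
      exact hT.2.1 c hc d hd
    · rintro e he hcompat
      have heT : e ∈ T := by
        apply hT.2.2 e ⟨he.1, he.2.1, le_trans he.2.2 (le_of_lt hw2)⟩
        intro c hc
        rcases step2 c hc with h | h | hceq
        · exact hcompat c ⟨hc, h⟩
        · obtain ⟨u1, u2, u3⟩ := hT.1 c hc
          obtain ⟨v1, v2, v3⟩ := he
          simp only [Cross]; push_neg; omega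
        · subst hceq
          obtain ⟨v1, v2, v3⟩ := he
          simp only [Cross, Prod.fst, Prod.snd]; push_neg; omega
      exact ⟨heT, he.2.2⟩
  have hmax2 : MaxNC w q {c ∈ T | w ≤ c.1} := by
    refine ⟨?_, ?_, ?_⟩
    · rintro c ⟨hc, hcw⟩
      exact ⟨hcw, (hT.1 c hc).2.1, (hT.1 c hc).2.2⟩
    · rintro c ⟨hc, -⟩ d ⟨hd, -⟩
      exact hT.2.1 c hc d hd
    · rintro e he hcompat
      have heT : e ∈ T := by
        apply hT.2.2 e ⟨le_trans (le_of_lt hw1) he.1, he.2.1, he.2.2⟩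
        intro c hc
        rcases step2 c hc with h | h | hceq
        · obtain ⟨u1, u2, u3⟩ := hT.1 c hc
          obtain ⟨v1, v2, v3⟩ := he
          simp only [Cross]; push_neg; omega
        · exact hcompat c ⟨hc, h⟩
        · subst hceq
          obtain ⟨v1, v2, v3⟩ := he
          simp only [Cross, Prod.fst, Prod.snd]; push_neg; omega
      exact ⟨heT, he.1⟩
  refine ⟨hmax1, hmax2, ?_⟩
  ext c
  simp only [Set.mem_insert_iff, Set.mem_union, Set.mem_sep_iff]
  constructor
  · intro hc
    rcases step2 c hc with h | h | h
    · exact Or.inr (Or.inl ⟨hc, h⟩)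
    · exact Or.inr (Or.inr ⟨hc, h⟩)
    · exact Or.inl h
  · rintro (rfl | ⟨hc, -⟩ | ⟨hc, -⟩) <;> [exact hpqT; exact hc; exact hc]


lemma sum_Ioc_split (f : ℤ → ℤ) {a b c : ℤ} (hab : a ≤ b) (hbc : b ≤ c) :
    (∑ v ∈ Finset.Ioc a b, f v) + (∑ v ∈ Finset.Ioc b c, f v) = ∑ v ∈ Finset.Ioc a c, f v := by
  rw [← Finset.sum_union (by
      rw [Finset.disjoint_left]
      intro x hx hx'
      simp only [Finset.mem_Ioc] at hx hx'
      omega), Finset.Ioc_union_Ioc_eq_Ioc hab hbc]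

lemma assemble {p w q : ℤ} (hw1 : p < w) (hw2 : w < q) {b1 b2 f : ℤ → ℕ}
    (h1 : b1 ∈ GoodSeq p w) (h2 : b2 ∈ GoodSeq w q)
    (hf : ∀ v, f v = b1 v + b2 v + (if v = q then 1 else 0)) :
    f ∈ GoodSeq p q ∧ (∑ v ∈ Finset.Ioc p w, (f v : ℤ)) = w - p - 1 ∧
      ∀ u, w < u → u < q → (∑ v ∈ Finset.Ioc p u, (f v : ℤ)) < u - p - 1 := by
  obtain ⟨s1, g1, t1⟩ := h1
  obtain ⟨s2, g2, t2⟩ := h2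
  have hcast : ∀ v : ℤ, (f v : ℤ) = (b1 v : ℤ) + (b2 v : ℤ) + (if v = q then 1 else 0) := by
    intro v; rw [hf v]; split_ifs with h <;> push_cast <;> ring
  have key1 : ∀ u, u ≤ w → (∑ v ∈ Finset.Ioc p u, (f v : ℤ)) = ∑ v ∈ Finset.Ioc p u, (b1 v : ℤ) := by
    intro u hu
    rw [Finset.sum_congr rfl]
    intro v hv
    simp only [Finset.mem_Ioc] at hv
    rw [hcast v, s2 v (by simp only [Set.mem_Ioc]; omega), if_neg (by omega)]
    push_cast; ring
  have key2 : ∀ u, w ≤ u → (∑ v ∈ Finset.Ioc p u, (f v : ℤ)) =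
      (w - p - 1) + (∑ v ∈ Finset.Ioc w u, (b2 v : ℤ)) + (if q ≤ u then 1 else 0) := by
    intro u hu
    have hsumf : ∀ v ∈ Finset.Ioc w u, (f v : ℤ) = (b2 v : ℤ) + (if v = q then 1 else 0) := by
      intro v hv
      simp only [Finset.mem_Ioc] at hv
      rw [hcast v, s1 v (by simp only [Set.mem_Ioc]; omega)]
      push_cast; ring
    rw [← sum_Ioc_split _ (le_of_lt hw1) hu, key1 w (le_refl _), t1,
      Finset.sum_congr rfl hsumf, Finset.sum_add_distrib,
      Finset.sum_ite_eq' (Finset.Ioc w u) q (fun _ => (1 : ℤ))]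
    have hmem : (if q ∈ Finset.Ioc w u then (1 : ℤ) else 0) = (if q ≤ u then 1 else 0) := by
      simp only [Finset.mem_Ioc]
      split_ifs <;> omega
    rw [hmem]
    ring
  refine ⟨⟨?_, ?_, ?_⟩, ?_, ?_⟩
  · intro v hv
    simp only [Set.mem_Ioc] at hv
    rw [hf v, s1 v (by simp only [Set.mem_Ioc]; omega), s2 v (by simp only [Set.mem_Ioc]; omega),
      if_neg (by omega)]
  · intro u hu
    simp only [Set.mem_Ioc] at hu
    rcases le_or_gt u w with h | h
    · rw [key1 u h]
      exact le_trans (g1 u (by simp only [Set.mem_Ioc]; omega)) (by omega)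
    · rw [key2 u (le_of_lt h)]
      have := g2 u (by simp only [Set.mem_Ioc]; omega)
      split_ifs <;> omega
  · rw [key2 q (le_of_lt hw2), t2, if_pos (le_refl _)]
    ring
  · rw [key1 w (le_refl _)]; exact t1
  · intro u hu1 hu2
    rw [key2 u (le_of_lt hu1), if_neg (by omega)]
    have := g2 u (by simp only [Set.mem_Ioc]; omega)
    omega

lemma recover {p w q : ℤ} (hw2 : w < q) {b1 b2 f : ℤ → ℕ}
    (s1 : ∀ v, v ∉ Set.Ioc p w → b1 v = 0) (s2 : ∀ v, v ∉ Set.Ioc w q → b2 v = 0)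
    (hf : ∀ v, f v = b1 v + b2 v + (if v = q then 1 else 0)) :
    (∀ v, b1 v = if v ≤ w then f v else 0) ∧
      (∀ v, b2 v = if w < v then f v - (if v = q then 1 else 0) else 0) := by
  constructor
  · intro v
    by_cases h : v ≤ w
    · rw [if_pos h, hf v, s2 v (by simp only [Set.mem_Ioc]; omega), if_neg (by omega)]
      omega
    · rw [if_neg h]
      exact s1 v (by simp only [Set.mem_Ioc]; omega)
  · intro v
    by_cases h : w < v
    · rw [if_pos h, hf v, s1 v (by simp only [Set.mem_Ioc]; omega)]
      split_ifs <;> omega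
    · rw [if_neg h]
      exact s2 v (by simp only [Set.mem_Ioc]; omega)

theorem core_bij : ∀ (N : ℕ) (p q : ℤ), q - p = (N : ℤ) → 1 ≤ N →
    Set.BijOn chordTop {T | MaxNC p q T} (GoodSeq p q) := by
  intro N
  induction N using Nat.strong_induction_on with
  | _ N IH =>
  intro p q hqp hN
  rcases eq_or_lt_of_le hN with h1 | h2
  · -- base case : q = p + 1
    have hq : q = p + 1 := by omega
    subst hq
    have hIocsing : Finset.Ioc p (p + 1) = {p + 1} := by
      ext x; simp only [Finset.mem_Ioc, Finset.mem_singleton]; omega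
    have hsetT : {T : Set (ℤ × ℤ) | MaxNC p (p + 1) T} = {∅} := by
      ext T
      simp only [Set.mem_setOf_eq, Set.mem_singleton_iff]
      constructor
      · intro hT
        ext c
        simp only [Set.mem_empty_iff_false, iff_false]
        intro hc
        obtain ⟨a1, a2, a3⟩ := hT.1 c hc
        omega
      · rintro rfl
        refine ⟨by rintro c ⟨⟩, by rintro c ⟨⟩, ?_⟩
        intro e he _
        obtain ⟨a1, a2, a3⟩ := he
        exact absurd rfl (by omega : ¬ (0 : ℤ) = 0)
    have hsetB : GoodSeq p (p + 1) = {fun _ => 0} := by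
      ext b
      simp only [GoodSeq, Set.mem_setOf_eq, Set.mem_singleton_iff]
      constructor
      · rintro ⟨s, g, t⟩
        funext v
        by_cases hv : v ∈ Set.Ioc p (p + 1)
        · simp only [Set.mem_Ioc] at hv
          have hveq : v = p + 1 := by omega
          rw [hIocsing, Finset.sum_singleton] at t
          subst hveq
          simpa using t
        · exact s v hv
      · rintro rfl
        refine ⟨fun v _ => rfl, ?_, ?_⟩
        · intro u hu
          simp only [Set.mem_Ioc] at hu
          simp only [Nat.cast_zero, Finset.sum_const_zero]
          omega
        · simp only [Nat.cast_zero, Finset.sum_const_zero]; omega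
    rw [hsetT, hsetB]
    have : chordTop ∅ = fun _ => (0 : ℕ) := by
      funext v
      unfold chordTop
      convert Set.ncard_empty (ℤ × ℤ)
      ext c; simp
    refine ⟨?_, ?_, ?_⟩
    · rintro T rfl; simp [this]
    · rintro T rfl T' rfl _; rfl
    · rintro b rfl; exact ⟨∅, rfl, this⟩
  · -- inductive step : p + 2 ≤ q
    have hpq : p + 2 ≤ q := by omega
    constructor
    · -- MapsTo
      intro T hT
      simp only [Set.mem_setOf_eq] at hT
      obtain ⟨w, hw1, hw2, hmax1, hmax2, hTeq⟩ := decomp hT hpq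
      have hb1 : chordTop {c ∈ T | c.2 ≤ w} ∈ GoodSeq p w :=
        (IH (w - p).toNat (by omega) p w (by omega) (by omega)).mapsTo hmax1
      have hb2 : chordTop {c ∈ T | w ≤ c.1} ∈ GoodSeq w q :=
        (IH (q - w).toNat (by omega) w q (by omega) (by omega)).mapsTo hmax2
      have hf : ∀ v, chordTop T v = chordTop {c ∈ T | c.2 ≤ w} v
          + chordTop {c ∈ T | w ≤ c.1} v + (if v = q then 1 else 0) := by
        intro v
        conv_lhs => rw [hTeq]
        exact chordTop_insert_union hw1 hw2 hmax1.1 hmax2.1 v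
      exact (assemble hw1 hw2 hb1 hb2 hf).1
    constructor
    · -- InjOn
      intro T hT T' hT' htop
      simp only [Set.mem_setOf_eq] at hT hT'
      obtain ⟨w, hw1, hw2, hmax1, hmax2, hTeq⟩ := decomp hT hpq
      obtain ⟨w', hw1', hw2', hmax1', hmax2', hTeq'⟩ := decomp hT' hpq
      have hb1 : chordTop {c ∈ T | c.2 ≤ w} ∈ GoodSeq p w :=
        (IH (w - p).toNat (by omega) p w (by omega) (by omega)).mapsTo hmax1
      have hb2 : chordTop {c ∈ T | w ≤ c.1} ∈ GoodSeq w q :=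
        (IH (q - w).toNat (by omega) w q (by omega) (by omega)).mapsTo hmax2
      have hb1' : chordTop {c ∈ T' | c.2 ≤ w'} ∈ GoodSeq p w' :=
        (IH (w' - p).toNat (by omega) p w' (by omega) (by omega)).mapsTo hmax1'
      have hb2' : chordTop {c ∈ T' | w' ≤ c.1} ∈ GoodSeq w' q :=
        (IH (q - w').toNat (by omega) w' q (by omega) (by omega)).mapsTo hmax2'
      have hf : ∀ v, chordTop T v = chordTop {c ∈ T | c.2 ≤ w} v
          + chordTop {c ∈ T | w ≤ c.1} v + (if v = q then 1 else 0) := by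
        intro v
        conv_lhs => rw [hTeq]
        exact chordTop_insert_union hw1 hw2 hmax1.1 hmax2.1 v
      have hf' : ∀ v, chordTop T' v = chordTop {c ∈ T' | c.2 ≤ w'} v
          + chordTop {c ∈ T' | w' ≤ c.1} v + (if v = q then 1 else 0) := by
        intro v
        conv_lhs => rw [hTeq']
        exact chordTop_insert_union hw1' hw2' hmax1'.1 hmax2'.1 v
      obtain ⟨-, hA, hB⟩ := assemble hw1 hw2 hb1 hb2 hf
      obtain ⟨-, hA', hB'⟩ := assemble hw1' hw2' hb1' hb2' hf'
      -- the split point is determined by the top sequence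
      have hww : w = w' := by
        rw [htop] at hA hB
        by_contra hne
        rcases lt_or_gt_of_ne hne with h | h
        · have := hB w' h hw2'
          omega
        · have := hB' w h hw2
          omega
      subst hww
      obtain ⟨r1, r2⟩ := recover hw2 hb1.1 hb2.1 hf
      obtain ⟨r1', r2'⟩ := recover hw2 hb1'.1 hb2'.1 hf'
      have heq1 : chordTop {c ∈ T | c.2 ≤ w} = chordTop {c ∈ T' | c.2 ≤ w} := by
        funext v
        rw [r1 v, r1' v, htop]
      have heq2 : chordTop {c ∈ T | w ≤ c.1} = chordTop {c ∈ T' | w ≤ c.1} := by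
        funext v
        rw [r2 v, r2' v, htop]
      have hT1 : {c ∈ T | c.2 ≤ w} = {c ∈ T' | c.2 ≤ w} :=
        (IH (w - p).toNat (by omega) p w (by omega) (by omega)).injOn hmax1 hmax1' heq1
      have hT2 : {c ∈ T | w ≤ c.1} = {c ∈ T' | w ≤ c.1} :=
        (IH (q - w).toNat (by omega) w q (by omega) (by omega)).injOn hmax2 hmax2' heq2
      rw [hTeq, hTeq', hT1, hT2]
    · -- SurjOn
      intro b hb
      obtain ⟨s, g, t⟩ := hb
      classical
      set P : ℤ → Prop := fun v => p < v ∧ v < q ∧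
        (∑ x ∈ Finset.Ioc p v, (b x : ℤ)) = v - p - 1 with hPdef
      have hne : P (p + 1) := by
        refine ⟨by omega, by omega, ?_⟩
        have h1 := g (p + 1) (by simp only [Set.mem_Ioc]; omega)
        have h2 : (0 : ℤ) ≤ ∑ x ∈ Finset.Ioc p (p + 1), (b x : ℤ) :=
          Finset.sum_nonneg (fun i _ => by positivity)
        omega
      obtain ⟨w, hwP, hgreatest⟩ := Int.exists_greatest_of_bdd (P := P)
        ⟨q, fun z hz => le_of_lt hz.2.1⟩ ⟨p + 1, hne⟩
      obtain ⟨hw1, hw2, hwsum⟩ := hwP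
      have hIocq : Finset.Ioc (q - 1) q = {q} := by
        ext x; simp only [Finset.mem_Ioc, Finset.mem_singleton]; omega
      have hsplitq : (∑ v ∈ Finset.Ioc p (q - 1), (b v : ℤ)) + (b q : ℤ)
          = ∑ v ∈ Finset.Ioc p q, (b v : ℤ) := by
        rw [← sum_Ioc_split (fun v => (b v : ℤ)) (by omega : p ≤ q - 1) (by omega : q - 1 ≤ q),
          hIocq, Finset.sum_singleton]
      have hbq : 1 ≤ b q := by
        have hg := g (q - 1) (by simp only [Set.mem_Ioc]; omega)
        have : (1 : ℤ) ≤ (b q : ℤ) := by omega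
        exact_mod_cast this
      have hstrict : ∀ u, w < u → u < q → (∑ v ∈ Finset.Ioc p u, (b v : ℤ)) ≤ u - p - 2 := by
        intro u hu1 hu2
        have hle := g u (by simp only [Set.mem_Ioc]; omega)
        rcases eq_or_lt_of_le hle with he | hl
        · exfalso
          have := hgreatest u ⟨by omega, hu2, he⟩
          omega
        · omega
      set b1 : ℤ → ℕ := fun v => if v ≤ w then b v else 0 with hb1def
      set b2 : ℤ → ℕ := fun v => if v = q then b q - 1 else if w < v then b v else 0 with hb2def
      have hfq : ∀ v, b v = b1 v + b2 v + (if v = q then 1 else 0) := by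
        intro v
        by_cases hq : v = q
        · simp only [hb1def, hb2def, hq]
          simp only [if_true]
          rw [if_neg (show ¬ q ≤ w by omega)]
          omega
        · by_cases hw : v ≤ w
          · simp only [hb1def, hb2def, if_pos hw, if_neg hq, if_neg (by omega : ¬ w < v)]
            omega
          · simp only [hb1def, hb2def, if_neg hw, if_neg hq, if_pos (by omega : w < v)]
            omega
      have hb1good : b1 ∈ GoodSeq p w := by
        refine ⟨?_, ?_, ?_⟩
        · intro v hv
          simp only [Set.mem_Ioc] at hv
          simp only [hb1def]
          by_cases h : v ≤ w
          · rw [if_pos h]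
            exact s v (by simp only [Set.mem_Ioc]; omega)
          · rw [if_neg h]
        · intro u hu
          simp only [Set.mem_Ioc] at hu
          have hcg : ∀ v ∈ Finset.Ioc p u, (b1 v : ℤ) = (b v : ℤ) := by
            intro v hv
            simp only [Finset.mem_Ioc] at hv
            simp only [hb1def]
            rw [if_pos (by omega)]
          rw [Finset.sum_congr rfl hcg]
          exact g u (by simp only [Set.mem_Ioc]; omega)
        · have hcg : ∀ v ∈ Finset.Ioc p w, (b1 v : ℤ) = (b v : ℤ) := by
            intro v hv
            simp only [Finset.mem_Ioc] at hv
            simp only [hb1def]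
            rw [if_pos (by omega)]
          rw [Finset.sum_congr rfl hcg]
          exact hwsum
      have hsum2 : ∀ u, w ≤ u → u < q →
          (∑ v ∈ Finset.Ioc w u, (b2 v : ℤ)) = (∑ v ∈ Finset.Ioc p u, (b v : ℤ)) - (w - p - 1) := by
        intro u hu1 hu2
        have hcg : ∀ v ∈ Finset.Ioc w u, (b2 v : ℤ) = (b v : ℤ) := by
          intro v hv
          simp only [Finset.mem_Ioc] at hv
          simp only [hb2def]
          rw [if_neg (by omega), if_pos (by omega)]
        rw [Finset.sum_congr rfl hcg, ← sum_Ioc_split (fun v => (b v : ℤ)) (le_of_lt hw1) hu1,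
          hwsum]
        ring
      have hkeyq : (∑ v ∈ Finset.Ioc w q, (b2 v : ℤ)) = q - w - 1 := by
        have hb2q : (b2 q : ℤ) = (b q : ℤ) - 1 := by
          simp only [hb2def, if_pos rfl]
          push_cast [Nat.cast_sub hbq]
          ring
        have hcg2 : ∀ v ∈ Finset.Ioc w (q - 1), (b2 v : ℤ) = (b v : ℤ) := by
          intro v hv
          simp only [Finset.mem_Ioc] at hv
          simp only [hb2def]
          rw [if_neg (by omega), if_pos (by omega)]
        have hs1 : (∑ v ∈ Finset.Ioc w (q - 1), (b2 v : ℤ)) + (b2 q : ℤ)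
            = ∑ v ∈ Finset.Ioc w q, (b2 v : ℤ) := by
          rw [← sum_Ioc_split (fun v => (b2 v : ℤ)) (by omega : w ≤ q - 1) (by omega : q - 1 ≤ q)]
          congr 1
          rw [hIocq, Finset.sum_singleton]
        have hs2 : (∑ v ∈ Finset.Ioc p w, (b v : ℤ)) + (∑ v ∈ Finset.Ioc w (q - 1), (b v : ℤ))
            = ∑ v ∈ Finset.Ioc p (q - 1), (b v : ℤ) :=
          sum_Ioc_split _ (le_of_lt hw1) (by omega)
        rw [Finset.sum_congr rfl hcg2] at hs1
        omega
      have hb2good : b2 ∈ GoodSeq w q := by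
        refine ⟨?_, ?_, ?_⟩
        · intro v hv
          simp only [Set.mem_Ioc] at hv
          simp only [hb2def]
          rw [if_neg (by omega)]
          by_cases h : w < v
          · rw [if_pos h]
            exact s v (by simp only [Set.mem_Ioc]; omega)
          · rw [if_neg h]
        · intro u hu
          simp only [Set.mem_Ioc] at hu
          rcases eq_or_lt_of_le hu.2 with he | hl
          · rw [he, hkeyq]
          · rw [hsum2 u (le_of_lt hu.1) hl]
            have := hstrict u hu.1 hl
            omega
        · exact hkeyq
      obtain ⟨T₁, hT₁, hcb1⟩ := (IH (w - p).toNat (by omega) p w (by omega) (by omega)).surjOn hb1good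
      obtain ⟨T₂, hT₂, hcb2⟩ := (IH (q - w).toNat (by omega) w q (by omega) (by omega)).surjOn hb2good
      simp only [Set.mem_setOf_eq] at hT₁ hT₂
      refine ⟨insert (p, q) (T₁ ∪ T₂), glue hw1 hw2 hT₁ hT₂, ?_⟩
      funext v
      rw [chordTop_insert_union hw1 hw2 hT₁.1 hT₂.1 v, hcb1, hcb2, ← hfq v]

end Core
open Core

variable {n : ℕ}

/-- The chord associated to a (window) arc. -/
def toChord (n : ℕ) : Arc n → ℤ × ℤ
  | .inner i t => ((i.val : ℤ), (i.val : ℤ) + (t : ℤ))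
  | .proj j => (-1, if j.val = 0 then (n : ℤ) else (j.val : ℤ))

/-- The distinguished projective arc. -/
abbrev proj0 (n : ℕ) : Arc n := Arc.proj ((n : ℕ) : ZMod n)

/-- Window arcs: admissible and compatible with the distinguished projective arc. -/
def Window (n : ℕ) (a : Arc n) : Prop := a.IsAdmissible ∧ a.Compatible (proj0 n)

lemma nmul_eq_zero {n : ℕ} (hn : 0 < n) {d : ℤ} (h1 : -(n : ℤ) < n * d)
    (h2 : (n : ℤ) * d < n) : d = 0 := by
  rcases lt_trichotomy d 0 with h | h | h
  · exfalso
    have : (n : ℤ) * d ≤ n * (-1) := by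
      apply mul_le_mul_of_nonneg_left (by omega) (by positivity)
    omega
  · exact h
  · exfalso
    have : (n : ℤ) * 1 ≤ n * d := by
      apply mul_le_mul_of_nonneg_left (by omega) (by positivity)
    omega

lemma val_natCast_eq [NeZero n] (i : ZMod n) : ((i.val : ℕ) : ZMod n) = i :=
  ZMod.natCast_rightInverse i

lemma intCast_eq_iff [NeZero n] (x : ℤ) (i : ZMod n) :
    (x : ZMod n) = i ↔ ∃ k : ℤ, x = (i.val : ℤ) + (n : ℤ) * k := by
  have h2 : (((i.val : ℕ) : ℤ) : ZMod n) = i := by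
    push_cast
    exact val_natCast_eq i
  constructor
  · intro h
    rw [← h2, ZMod.intCast_eq_intCast_iff] at h
    obtain ⟨k, hk⟩ := Int.ModEq.dvd h
    refine ⟨-k, ?_⟩
    rw [mul_neg]
    omega
  · rintro ⟨k, rfl⟩
    have hsplit : (((i.val : ℤ) + (n : ℤ) * k : ℤ) : ZMod n)
        = (((i.val : ℤ) : ZMod n)) + (((n : ℤ) : ZMod n)) * ((k : ℤ) : ZMod n) := by
      push_cast
      ring
    have hn0 : (((n : ℤ) : ZMod n)) = 0 := by exact_mod_cast ZMod.natCast_self n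
    rw [hsplit, hn0, h2]
    ring

lemma intCast_eq_zero_iff' [NeZero n] (y : ℤ) :
    (y : ZMod n) = ((n : ℕ) : ZMod n) ↔ ∃ m : ℤ, y = (n : ℤ) * m := by
  rw [ZMod.natCast_self, ZMod.intCast_zmod_eq_zero_iff_dvd]
  constructor
  · rintro ⟨m, hm⟩; exact ⟨m, hm⟩
  · rintro ⟨m, hm⟩; exact ⟨m, hm⟩

lemma val_lt' [NeZero n] (i : ZMod n) : i.val < n := ZMod.val_lt i

lemma compat_proj0_inner_iff [NeZero n] (i : ZMod n) (t : ℕ) :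
    (Arc.inner i t).Compatible (proj0 n) ↔ (i.val : ℤ) + t ≤ n := by
  have hn : 0 < n := Nat.pos_of_ne_zero (NeZero.ne n)
  simp only [Arc.Compatible, proj0]
  constructor
  · intro h
    by_contra hcon
    push_neg at hcon
    apply h
    refine ⟨(i.val : ℤ), (n : ℤ), ?_, ?_, ?_, ?_⟩
    · exact_mod_cast val_natCast_eq i
    · push_cast; rfl
    · exact_mod_cast val_lt' i
    · omega
  · rintro hle ⟨x, y, hx, hy, hxy, hyxt⟩
    obtain ⟨k, rfl⟩ := (intCast_eq_iff x i).mp hx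
    obtain ⟨m, rfl⟩ := (intCast_eq_zero_iff' y).mp hy
    have hval : 0 ≤ (i.val : ℤ) := by positivity
    have hd : (n : ℤ) * (m - k) = n * m - n * k := by ring
    have hd0 : m - k = 0 := by
      apply nmul_eq_zero hn <;> omega
    have : (n : ℤ) * (m - k) = 0 := by rw [hd0]; ring
    omega


lemma window_inner_facts [NeZero n] {i : ZMod n} {t : ℕ} (h : Window n (Arc.inner i t)) :
    2 ≤ (t : ℤ) ∧ (t : ℤ) ≤ n ∧ 0 ≤ (i.val : ℤ) ∧ (i.val : ℤ) < n ∧ (i.val : ℤ) + t ≤ n := by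
  obtain ⟨hadm, hcomp⟩ := h
  simp only [Arc.IsAdmissible] at hadm
  exact ⟨by exact_mod_cast hadm.1, by exact_mod_cast hadm.2, by positivity,
    by exact_mod_cast val_lt' i, (compat_proj0_inner_iff i t).mp hcomp⟩

lemma compat_inner_inner_iff [NeZero n] {i k : ZMod n} {t s : ℕ}
    (ha : Window n (Arc.inner i t)) (hb : Window n (Arc.inner k s)) :
    (Arc.inner i t).Compatible (Arc.inner k s) ↔
      ¬ Cross (toChord n (Arc.inner i t)) (toChord n (Arc.inner k s)) := by
  have hn : 0 < n := Nat.pos_of_ne_zero (NeZero.ne n)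
  obtain ⟨ht2, htn, hr0, hrn, hrt⟩ := window_inner_facts ha
  obtain ⟨hs2, hsn, hr0', hrn', hrt'⟩ := window_inner_facts hb
  simp only [Arc.Compatible, toChord, Cross, Prod.fst, Prod.snd]
  constructor
  · intro h hcross
    apply h
    refine ⟨(i.val : ℤ), (k.val : ℤ), by exact_mod_cast val_natCast_eq i,
      by exact_mod_cast val_natCast_eq k, ?_⟩
    rcases hcross with ⟨u1, u2, u3⟩ | ⟨u1, u2, u3⟩
    · exact Or.inl ⟨u1, u2, u3⟩
    · exact Or.inr ⟨u1, u2, u3⟩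
  · rintro hnc ⟨x, y, hx, hy, hor⟩
    obtain ⟨a, rfl⟩ := (intCast_eq_iff x i).mp hx
    obtain ⟨b, rfl⟩ := (intCast_eq_iff y k).mp hy
    have hd : (n : ℤ) * (b - a) = n * b - n * a := by ring
    apply hnc
    rcases hor with ⟨u1, u2, u3⟩ | ⟨u1, u2, u3⟩
    · have hd0 : b - a = 0 := nmul_eq_zero hn (by omega) (by omega)
      have hz : (n : ℤ) * (b - a) = 0 := by rw [hd0]; ring
      left; omega
    · have hd0 : b - a = 0 := nmul_eq_zero hn (by omega) (by omega)
      have hz : (n : ℤ) * (b - a) = 0 := by rw [hd0]; ring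
      right; omega

lemma compat_inner_proj_iff [NeZero n] {i : ZMod n} {t : ℕ} {j : ZMod n}
    (ha : Window n (Arc.inner i t)) :
    (Arc.inner i t).Compatible (Arc.proj j) ↔
      ¬ Cross (toChord n (Arc.inner i t)) (toChord n (Arc.proj j)) := by
  have hn : 0 < n := Nat.pos_of_ne_zero (NeZero.ne n)
  obtain ⟨ht2, htn, hr0, hrn, hrt⟩ := window_inner_facts ha
  by_cases hm : j.val = 0
  · have hj0 : j = ((n : ℕ) : ZMod n) := by
      rw [ZMod.natCast_self]
      exact (ZMod.val_eq_zero j).mp hm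
    have hchord : toChord n (Arc.proj j) = (-1, (n : ℤ)) := by simp [toChord, hm]
    rw [hchord]
    refine ⟨fun _ => ?_, fun _ => ?_⟩
    · simp only [toChord, Cross, Prod.fst, Prod.snd]
      push_neg
      omega
    · rw [hj0]
      exact (compat_proj0_inner_iff i t).mpr hrt
  · have hm1 : 1 ≤ (j.val : ℤ) := by
      have : 1 ≤ j.val := Nat.one_le_iff_ne_zero.mpr hm
      exact_mod_cast this
    have hmn : (j.val : ℤ) < n := by exact_mod_cast val_lt' j
    have hchord : toChord n (Arc.proj j) = (-1, (j.val : ℤ)) := by simp [toChord, hm]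
    rw [hchord]
    simp only [Arc.Compatible, toChord, Cross, Prod.fst, Prod.snd]
    constructor
    · intro h hcross
      apply h
      have hlt : (i.val : ℤ) < j.val ∧ (j.val : ℤ) < i.val + t := by
        rcases hcross with ⟨u1, u2, u3⟩ | ⟨u1, u2, u3⟩
        · exact absurd u1 (by omega)
        · exact ⟨u2, u3⟩
      exact ⟨(i.val : ℤ), (j.val : ℤ), by exact_mod_cast val_natCast_eq i,
        by exact_mod_cast val_natCast_eq j, hlt.1, hlt.2⟩
    · rintro hnc ⟨x, y, hx, hy, h1, h2⟩
      obtain ⟨a, rfl⟩ := (intCast_eq_iff x i).mp hx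
      obtain ⟨b, rfl⟩ := (intCast_eq_iff y j).mp hy
      have hd : (n : ℤ) * (b - a) = n * b - n * a := by ring
      have hd0 : b - a = 0 := nmul_eq_zero hn (by omega) (by omega)
      have hz : (n : ℤ) * (b - a) = 0 := by rw [hd0]; ring
      apply hnc
      right
      omega

lemma compat_proj_proj_iff (j j' : ZMod n) :
    (Arc.proj j).Compatible (Arc.proj j') ↔
      ¬ Cross (toChord n (Arc.proj j)) (toChord n (Arc.proj j')) := by
  simp only [Arc.Compatible, toChord, Cross, Prod.fst, Prod.snd]
  refine ⟨fun _ hcross => ?_, fun _ => trivial⟩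
  rcases hcross with ⟨u1, -, -⟩ | ⟨u1, -, -⟩ <;> omega

lemma compat_iff [NeZero n] {a b : Arc n} (ha : Window n a) (hb : Window n b) :
    a.Compatible b ↔ ¬ Cross (toChord n a) (toChord n b) := by
  cases a with
  | inner i t =>
    cases b with
    | inner k s => exact compat_inner_inner_iff ha hb
    | proj j => exact compat_inner_proj_iff ha
  | proj j =>
    cases b with
    | inner k s =>
      have h1 : (Arc.proj j).Compatible (Arc.inner k s)
          ↔ (Arc.inner k s).Compatible (Arc.proj j) := Iff.rfl
      rw [h1, compat_inner_proj_iff hb]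
      exact ⟨fun h h2 => h (cross_symm h2), fun h h2 => h (cross_symm h2)⟩
    | proj j' => exact compat_proj_proj_iff j j'

lemma isChord_toChord [NeZero n] {a : Arc n} (ha : Window n a) :
    IsChord (-1) n (toChord n a) := by
  have hn : 0 < n := Nat.pos_of_ne_zero (NeZero.ne n)
  cases a with
  | inner i t =>
    obtain ⟨ht2, htn, hr0, hrn, hrt⟩ := window_inner_facts ha
    exact ⟨by simp only [toChord]; omega, by simp only [toChord]; omega,
      by simp only [toChord]; omega⟩
  | proj j =>
    by_cases hm : j.val = 0
    · have : toChord n (Arc.proj j) = (-1, (n : ℤ)) := by simp [toChord, hm]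
      rw [this]
      exact ⟨le_refl _, by simp only [Prod.fst, Prod.snd]; omega,
        by simp only [Prod.snd]; omega⟩
    · have hm1 : 1 ≤ j.val := Nat.one_le_iff_ne_zero.mpr hm
      have hmn : (j.val : ℤ) < n := by exact_mod_cast val_lt' j
      have : toChord n (Arc.proj j) = (-1, (j.val : ℤ)) := by simp [toChord, hm]
      rw [this]
      refine ⟨le_refl _, by simp only [Prod.fst, Prod.snd]; omega,
        by simp only [Prod.snd]; omega⟩


/-- The arc associated to a chord of the cut polygon. -/
def fromChord (n : ℕ) (e : ℤ × ℤ) : Arc n :=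
  if e.1 = -1 then Arc.proj ((e.2.toNat : ℕ) : ZMod n)
  else Arc.inner ((e.1.toNat : ℕ) : ZMod n) (e.2 - e.1).toNat

lemma toChord_fromChord [NeZero n] {e : ℤ × ℤ} (he : IsChord (-1) n e) :
    toChord n (fromChord n e) = e := by
  have hn : 0 < n := Nat.pos_of_ne_zero (NeZero.ne n)
  obtain ⟨h1, h2, h3⟩ := he
  by_cases hu : e.1 = -1
  · rw [fromChord, if_pos hu]
    rcases eq_or_lt_of_le h3 with hv | hv
    · have hval : ((e.2.toNat : ℕ) : ZMod n).val = 0 := by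
        have : (e.2.toNat : ℕ) = n := by omega
        rw [this, ZMod.natCast_self, ZMod.val_zero]
      rw [toChord, hval, if_pos rfl]
      exact Prod.ext (by omega) (by simp only [Prod.snd]; omega)
    · have hval : ((e.2.toNat : ℕ) : ZMod n).val = e.2.toNat :=
        ZMod.val_natCast_of_lt (by omega)
      have hne : ((e.2.toNat : ℕ) : ZMod n).val ≠ 0 := by omega
      rw [toChord, if_neg hne, hval]
      exact Prod.ext (by omega) (by simp only [Prod.snd]; omega)
  · rw [fromChord, if_neg hu]
    have hval : ((e.1.toNat : ℕ) : ZMod n).val = e.1.toNat :=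
      ZMod.val_natCast_of_lt (by omega)
    rw [toChord, hval]
    exact Prod.ext (by simp only [Prod.fst]; omega) (by simp only [Prod.snd]; omega)

lemma window_fromChord [NeZero n] {e : ℤ × ℤ} (he : IsChord (-1) n e) :
    Window n (fromChord n e) := by
  have hn : 0 < n := Nat.pos_of_ne_zero (NeZero.ne n)
  obtain ⟨h1, h2, h3⟩ := he
  by_cases hu : e.1 = -1
  · rw [fromChord, if_pos hu]
    exact ⟨trivial, trivial⟩
  · rw [fromChord, if_neg hu]
    have hval : ((e.1.toNat : ℕ) : ZMod n).val = e.1.toNat :=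
      ZMod.val_natCast_of_lt (by omega)
    constructor
    · exact ⟨by omega, by omega⟩
    · apply (compat_proj0_inner_iff _ _).mpr
      rw [hval]
      omega

lemma toChord_inj [NeZero n] : Function.Injective (toChord n) := by
  have hn : 0 < n := Nat.pos_of_ne_zero (NeZero.ne n)
  intro a b h
  cases a with
  | inner i t =>
    cases b with
    | inner k s =>
      rw [toChord, toChord, Prod.mk.injEq] at h
      obtain ⟨hik, hts⟩ := h
      have hik' : i = k := by
        rw [← val_natCast_eq i, ← val_natCast_eq k]
        congr 1
        exact_mod_cast hik
      have hts' : t = s := by omega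
      rw [hik', hts']
    | proj j =>
      rw [toChord, toChord, Prod.mk.injEq] at h
      have : (0 : ℤ) ≤ i.val := by positivity
      omega
  | proj j =>
    cases b with
    | inner k s =>
      rw [toChord, toChord, Prod.mk.injEq] at h
      have : (0 : ℤ) ≤ k.val := by positivity
      omega
    | proj j' =>
      rw [toChord, toChord, Prod.mk.injEq] at h
      obtain ⟨-, hv⟩ := h
      have hjlt : (j.val : ℤ) < n := by exact_mod_cast val_lt' j
      have hjlt' : (j'.val : ℤ) < n := by exact_mod_cast val_lt' j'
      congr 1
      by_cases hm : j.val = 0 <;> by_cases hm' : j'.val = 0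
      · rw [(ZMod.val_eq_zero j).mp hm, (ZMod.val_eq_zero j').mp hm']
      · rw [if_pos hm, if_neg hm'] at hv; omega
      · rw [if_neg hm, if_pos hm'] at hv; omega
      · rw [if_neg hm, if_neg hm'] at hv
        rw [← val_natCast_eq j, ← val_natCast_eq j']
        congr 1
        exact_mod_cast hv

lemma S_to_MaxNC [NeZero n] {X : Set (Arc n)} (hX : IsTriangulation n X)
    (hproj : proj0 n ∈ X) : MaxNC (-1) n (toChord n '' X) := by
  have hw : ∀ a ∈ X, Window n a := fun a ha => ⟨hX.1.1 a ha, hX.1.2 a ha _ hproj⟩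
  refine ⟨?_, ?_, ?_⟩
  · rintro c ⟨a, ha, rfl⟩
    exact isChord_toChord (hw a ha)
  · rintro c ⟨a, ha, rfl⟩ d ⟨b, hb, rfl⟩
    exact (compat_iff (hw a ha) (hw b hb)).mp (hX.1.2 a ha b hb)
  · intro e he hcompat
    have hwa' : Window n (fromChord n e) := window_fromChord he
    have hta' : toChord n (fromChord n e) = e := toChord_fromChord he
    have hcompat' : ∀ b ∈ X, (fromChord n e).Compatible b ∧ b.Compatible (fromChord n e) := by
      intro b hb
      constructor
      · rw [compat_iff hwa' (hw b hb), hta']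
        exact hcompat _ ⟨b, hb, rfl⟩
      · rw [compat_iff (hw b hb) hwa', hta']
        intro hc
        exact hcompat _ ⟨b, hb, rfl⟩ (cross_symm hc)
    have hY : PairwiseCompatible n (insert (fromChord n e) X) := by
      constructor
      · rintro b (rfl | hb)
        · exact hwa'.1
        · exact hX.1.1 b hb
      · rintro b (rfl | hb) c (rfl | hc)
        · rw [compat_iff hwa' hwa', hta']
          intro hcr
          rcases hcr with ⟨u1, -, -⟩ | ⟨u1, -, -⟩ <;> omega
        · exact (hcompat' c hc).1
        · exact (hcompat' b hb).2
        · exact hX.1.2 b hb c hc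
    have heq := hX.2 _ hY (Set.subset_insert (fromChord n e) X)
    have ha'X : fromChord n e ∈ X := by
      rw [← heq]
      exact Set.mem_insert _ X
    exact ⟨fromChord n e, ha'X, hta'⟩

lemma MaxNC_to_S [NeZero n] {T : Set (ℤ × ℤ)} (hT : MaxNC (-1) n T) :
    IsTriangulation n (fromChord n '' T) ∧ proj0 n ∈ fromChord n '' T ∧
      toChord n '' (fromChord n '' T) = T := by
  have hn : 0 < n := Nat.pos_of_ne_zero (NeZero.ne n)
  have himg : ∀ c ∈ T, toChord n (fromChord n c) = c := fun c hc =>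
    toChord_fromChord (hT.1 c hc)
  have hwin : ∀ c ∈ T, Window n (fromChord n c) := fun c hc =>
    window_fromChord (hT.1 c hc)
  have himgset : toChord n '' (fromChord n '' T) = T := by
    ext c
    constructor
    · rintro ⟨a, ⟨d, hd, rfl⟩, rfl⟩
      rw [himg d hd]
      exact hd
    · intro hc
      exact ⟨fromChord n c, ⟨c, hc, rfl⟩, himg c hc⟩
  have hmemproj : proj0 n ∈ fromChord n '' T := by
    have hchord : IsChord (-1) n ((-1 : ℤ), (n : ℤ)) :=
      ⟨le_refl _, by simp only [Prod.fst, Prod.snd]; omega, le_refl _⟩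
    have hmem : ((-1 : ℤ), (n : ℤ)) ∈ T := by
      apply hT.2.2 _ hchord
      intro c hc
      obtain ⟨a1, a2, a3⟩ := hT.1 c hc
      simp only [Cross, Prod.fst, Prod.snd]
      push_neg
      omega
    refine ⟨_, hmem, ?_⟩
    rw [fromChord, if_pos rfl]
    simp
  have hpc : PairwiseCompatible n (fromChord n '' T) := by
    constructor
    · rintro a ⟨c, hc, rfl⟩
      exact (hwin c hc).1
    · rintro a ⟨c, hc, rfl⟩ b ⟨d, hd, rfl⟩
      rw [compat_iff (hwin c hc) (hwin d hd), himg c hc, himg d hd]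
      exact hT.2.1 c hc d hd
  refine ⟨⟨hpc, ?_⟩, hmemproj, himgset⟩
  intro Y hY hXY
  apply Set.Subset.antisymm _ hXY
  intro y hy
  have hwy : Window n y := ⟨hY.1 y hy, hY.2 y hy _ (hXY hmemproj)⟩
  have hyc : toChord n y ∈ T := by
    apply hT.2.2 _ (isChord_toChord hwy)
    intro c hc
    rw [← himg c hc, ← compat_iff hwy (hwin c hc)]
    exact hY.2 y hy _ (hXY ⟨c, hc, rfl⟩)
  have hy' : fromChord n (toChord n y) = y := toChord_inj (himg _ hyc)
  exact ⟨_, hyc, hy'⟩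


/-- The representative in `{1, …, n}` of a residue class. -/
def rep (n : ℕ) (c : ZMod n) : ℤ := if c.val = 0 then (n : ℤ) else (c.val : ℤ)

lemma rep_bounds [NeZero n] (c : ZMod n) : 1 ≤ rep n c ∧ rep n c ≤ n := by
  have hn : 0 < n := Nat.pos_of_ne_zero (NeZero.ne n)
  have := val_lt' c
  unfold rep
  split_ifs with h
  · omega
  · constructor <;> [omega; omega]

lemma cast_rep [NeZero n] (c : ZMod n) : ((rep n c : ℤ) : ZMod n) = c := by
  unfold rep
  split_ifs with h
  · have : c = 0 := (ZMod.val_eq_zero c).mp h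
    rw [this]
    exact_mod_cast ZMod.natCast_self n
  · exact_mod_cast val_natCast_eq c

lemma rep_unique [NeZero n] {c : ZMod n} {V : ℤ} (h1 : 1 ≤ V) (h2 : V ≤ n)
    (h : (V : ZMod n) = c) : V = rep n c := by
  have hn : 0 < n := Nat.pos_of_ne_zero (NeZero.ne n)
  have hvlt := val_lt' c
  obtain ⟨k, hk⟩ := (intCast_eq_iff V c).mp h
  unfold rep
  split_ifs with hz
  · rw [hz] at hk
    push_cast at hk
    have hk1 : k - 1 = 0 := by
      apply nmul_eq_zero hn
      · have : (n : ℤ) * (k - 1) = n * k - n := by ring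
        omega
      · have : (n : ℤ) * (k - 1) = n * k - n := by ring
        omega
    have : (n : ℤ) * k = n * 1 := by
      have : k = 1 := by omega
      rw [this]
    simp only [mul_one] at this
    omega
  · have hz1 : 1 ≤ (c.val : ℤ) := by
      have : 1 ≤ c.val := Nat.one_le_iff_ne_zero.mpr hz
      exact_mod_cast this
    have hzn : (c.val : ℤ) < n := by exact_mod_cast hvlt
    have hk0 : k = 0 := by
      apply nmul_eq_zero hn <;> omega
    rw [hk0] at hk
    omega

lemma rep_natCast [NeZero n] {j : ℕ} (h1 : 1 ≤ j) (h2 : j ≤ n) :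
    rep n ((j : ℕ) : ZMod n) = (j : ℤ) := by
  symm
  apply rep_unique (by exact_mod_cast h1) (by exact_mod_cast h2)
  push_cast
  rfl

lemma terminal_toChord [NeZero n] {a : Arc n} (ha : Window n a) :
    1 ≤ (toChord n a).2 ∧ (toChord n a).2 ≤ n ∧
      (((toChord n a).2 : ZMod n) = a.terminal) := by
  have hn : 0 < n := Nat.pos_of_ne_zero (NeZero.ne n)
  cases a with
  | inner i t =>
    obtain ⟨ht2, htn, hr0, hrn, hrt⟩ := window_inner_facts ha
    refine ⟨by simp only [toChord]; omega, by simp only [toChord]; omega, ?_⟩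
    simp only [toChord, Arc.terminal]
    push_cast
    rw [val_natCast_eq i]
  | proj j =>
    have hjlt : (j.val : ℤ) < n := by exact_mod_cast val_lt' j
    by_cases hm : j.val = 0
    · have hc : toChord n (Arc.proj j) = (-1, (n : ℤ)) := by simp [toChord, hm]
      rw [hc]
      refine ⟨by simp only [Prod.snd]; omega, le_refl _, ?_⟩
      simp only [Prod.snd, Arc.terminal]
      rw [(ZMod.val_eq_zero j).mp hm]
      exact_mod_cast ZMod.natCast_self n
    · have hm1 : 1 ≤ j.val := Nat.one_le_iff_ne_zero.mpr hm
      have hc : toChord n (Arc.proj j) = (-1, (j.val : ℤ)) := by simp [toChord, hm]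
      rw [hc]
      refine ⟨by simp only [Prod.snd]; omega, by simp only [Prod.snd]; omega, ?_⟩
      simp only [Prod.snd, Arc.terminal]
      exact_mod_cast val_natCast_eq j

lemma top_eq [NeZero n] {X : Set (Arc n)} (hw : ∀ a ∈ X, Window n a) (c : ZMod n) :
    topSeq n X c = chordTop (toChord n '' X) (rep n c) := by
  unfold topSeq chordTop
  have hseteq : {ch ∈ toChord n '' X | ch.2 = rep n c}
      = toChord n '' {arc ∈ X | arc.terminal = c} := by
    ext ch
    constructor
    · rintro ⟨⟨a, ha, rfl⟩, h2⟩
      refine ⟨a, ⟨ha, ?_⟩, rfl⟩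
      obtain ⟨u1, u2, u3⟩ := terminal_toChord (hw a ha)
      rw [← u3, h2]
      exact cast_rep c
    · rintro ⟨a, ⟨ha, hterm⟩, rfl⟩
      refine ⟨⟨a, ha, rfl⟩, ?_⟩
      obtain ⟨u1, u2, u3⟩ := terminal_toChord (hw a ha)
      exact rep_unique u1 u2 (by rw [u3, hterm])
  rw [hseteq, Set.ncard_image_of_injective _ toChord_inj]

/-- Reindexing a `ℤ`-indexed sequence by residue classes. -/
def reindex (n : ℕ) (b : ℤ → ℕ) : ZMod n → ℕ := fun c => b (rep n c)

lemma hIoc0 : Finset.Ioc (-1 : ℤ) 0 = {0} := by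
  ext x
  simp only [Finset.mem_Ioc, Finset.mem_singleton]
  omega

lemma sum_Ioc_neg1 (b : ℤ → ℕ) {w : ℤ} (hw : 0 ≤ w) :
    (∑ v ∈ Finset.Ioc (-1 : ℤ) w, (b v : ℤ))
      = (b 0 : ℤ) + ∑ v ∈ Finset.Ioc (0 : ℤ) w, (b v : ℤ) := by
  rw [← sum_Ioc_split _ (by omega : (-1 : ℤ) ≤ 0) hw, hIoc0, Finset.sum_singleton]

lemma sum_Ioc_toIcc (f : ℤ → ℤ) (i : ℕ) :
    (∑ v ∈ Finset.Ioc (0 : ℤ) (i : ℤ), f v) = ∑ j ∈ Finset.Icc 1 i, f (j : ℤ) := by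
  have himg : (Finset.Icc 1 i).image (Nat.cast : ℕ → ℤ) = Finset.Ioc (0 : ℤ) (i : ℤ) := by
    ext v
    simp only [Finset.mem_image, Finset.mem_Icc, Finset.mem_Ioc]
    constructor
    · rintro ⟨p, hp, rfl⟩
      omega
    · intro hv
      exact ⟨v.toNat, by omega, by omega⟩
  rw [← himg, Finset.sum_image (fun a _ b _ h => by exact_mod_cast h)]

lemma goodseq_zero (hn : 0 < n) {b : ℤ → ℕ} (hb : b ∈ GoodSeq (-1) (n : ℤ)) : b 0 = 0 := by
  have := hb.2.1 0 (by simp only [Set.mem_Ioc]; constructor <;> omega)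
  rw [hIoc0, Finset.sum_singleton] at this
  omega

lemma resRep_eq (hn : 0 < n) {i : ℕ} (h1 : 1 ≤ i) (h2 : i ≤ n) : resRep n (i : ℤ) = i := by
  unfold resRep
  have : ((i : ℤ) - 1) % (n : ℤ) = (i : ℤ) - 1 :=
    Int.emod_eq_of_lt (by omega) (by omega)
  rw [this]
  omega

lemma psum_eq (hn : 0 < n) (a : ZMod n → ℕ) {i : ℕ} (h1 : 1 ≤ i) (h2 : i ≤ n) :
    psum n a (i : ℤ) = (∑ j ∈ Finset.Icc 1 i, (a ((j : ℕ) : ZMod n) : ℤ)) - i := by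
  unfold psum
  rw [resRep_eq hn h1 h2, Finset.sum_sub_distrib, Finset.sum_const]
  simp [Nat.card_Icc]

lemma reindex_natCast [NeZero n] (b : ℤ → ℕ) {j : ℕ} (h1 : 1 ≤ j) (h2 : j ≤ n) :
    reindex n b ((j : ℕ) : ZMod n) = b (j : ℤ) := by
  unfold reindex
  rw [rep_natCast h1 h2]

lemma reindex_bij [NeZero n] (hn : 0 < n) :
    Set.BijOn (reindex n) (GoodSeq (-1) (n : ℤ))
      {a : ZMod n → ℕ | (∑ p ∈ Finset.Icc 1 n, a ((p : ℕ) : ZMod n) = n) ∧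
        ∀ i ∈ Finset.Icc 1 n, psum n a (i : ℤ) ≤ 0} := by
  have hpartial : ∀ b ∈ GoodSeq (-1) (n : ℤ), ∀ i : ℕ, 1 ≤ i → i ≤ n →
      (∑ j ∈ Finset.Icc 1 i, (reindex n b ((j : ℕ) : ZMod n) : ℤ))
        = ∑ v ∈ Finset.Ioc (-1 : ℤ) (i : ℤ), (b v : ℤ) := by
    intro b hb i h1 h2
    rw [sum_Ioc_neg1 b (by omega), goodseq_zero hn hb, sum_Ioc_toIcc (fun v => (b v : ℤ)) i]
    rw [Finset.sum_congr rfl (fun j hj => ?_)]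
    · push_cast
      ring
    · simp only [Finset.mem_Icc] at hj
      rw [reindex_natCast b hj.1 (le_trans hj.2 h2)]
  refine ⟨?_, ?_, ?_⟩
  · -- MapsTo
    intro b hb
    have hsum : (∑ p ∈ Finset.Icc 1 n, (reindex n b ((p : ℕ) : ZMod n) : ℤ)) = n := by
      rw [hpartial b hb n (by omega) (le_refl n), hb.2.2]
      push_cast
      ring
    constructor
    · exact_mod_cast hsum
    · intro i hi
      simp only [Finset.mem_Icc] at hi
      rw [psum_eq hn _ hi.1 hi.2, hpartial b hb i hi.1 hi.2]
      have := hb.2.1 (i : ℤ) (by simp only [Set.mem_Ioc]; constructor <;> omega)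
      omega
  · -- InjOn
    intro b hb b' hb' heq
    funext v
    by_cases hv : 1 ≤ v ∧ v ≤ (n : ℤ)
    · have hv1 : 1 ≤ v.toNat := by omega
      have hv2 : v.toNat ≤ n := by omega
      have h1 := reindex_natCast b hv1 hv2
      have h2 := reindex_natCast b' hv1 hv2
      have hvv : ((v.toNat : ℕ) : ℤ) = v := by omega
      rw [hvv] at h1 h2
      rw [← h1, ← h2, heq]
    · by_cases hv0 : v = 0
      · rw [hv0, goodseq_zero hn hb, goodseq_zero hn hb']
      · rw [hb.1 v (by simp only [Set.mem_Ioc]; omega), hb'.1 v (by simp only [Set.mem_Ioc]; omega)]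
  · -- SurjOn
    intro a ha
    obtain ⟨hsum, hpsum⟩ := ha
    set b : ℤ → ℕ := fun v => if 1 ≤ v ∧ v ≤ (n : ℤ) then a ((v.toNat : ℕ) : ZMod n) else 0
      with hbdef
    have hbj : ∀ j : ℕ, 1 ≤ j → j ≤ n → b (j : ℤ) = a ((j : ℕ) : ZMod n) := by
      intro j h1 h2
      simp only [hbdef]
      rw [if_pos ⟨by exact_mod_cast h1, by exact_mod_cast h2⟩]
      have hjj : ((j : ℤ).toNat : ℕ) = j := by omega
      rw [hjj]
    have hIccsum : ∀ i : ℕ, i ≤ n → (∑ v ∈ Finset.Ioc (-1 : ℤ) (i : ℤ), (b v : ℤ))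
        = ∑ j ∈ Finset.Icc 1 i, (a ((j : ℕ) : ZMod n) : ℤ) := by
      intro i h2
      rw [sum_Ioc_neg1 b (by omega), sum_Ioc_toIcc (fun v => (b v : ℤ)) i]
      have hb0 : b 0 = 0 := by simp [hbdef]
      rw [hb0]
      push_cast
      rw [Finset.sum_congr rfl (fun j hj => ?_)]
      · ring
      · simp only [Finset.mem_Icc] at hj
        rw [hbj j hj.1 (le_trans hj.2 h2)]
    have hbmem : b ∈ GoodSeq (-1) (n : ℤ) := by
      refine ⟨?_, ?_, ?_⟩
      · intro v hv
        simp only [Set.mem_Ioc] at hv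
        simp only [hbdef]
        rw [if_neg (by omega)]
      · intro w hw
        simp only [Set.mem_Ioc] at hw
        by_cases hw0 : w = 0
        · rw [hw0, hIoc0, Finset.sum_singleton]
          have : b 0 = 0 := by simp [hbdef]
          rw [this]
          omega
        · have hw1 : 1 ≤ w.toNat := by omega
          have hw2 : w.toNat ≤ n := by omega
          have hww : ((w.toNat : ℕ) : ℤ) = w := by omega
          have := hpsum w.toNat (by simp only [Finset.mem_Icc]; omega)
          rw [psum_eq hn a hw1 hw2] at this
          rw [← hww, hIccsum w.toNat hw2]
          omega
      · have := hIccsum n (le_refl n)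
        rw [this]
        have hsum' : (∑ j ∈ Finset.Icc 1 n, (a ((j : ℕ) : ZMod n) : ℤ)) = n := by
          exact_mod_cast congrArg (Nat.cast : ℕ → ℤ) hsum
        rw [hsum']
        push_cast
        ring
    refine ⟨b, hbmem, ?_⟩
    funext c
    unfold reindex
    simp only [hbdef]
    obtain ⟨hr1, hr2⟩ := rep_bounds c
    rw [if_pos ⟨hr1, hr2⟩]
    congr 1
    have : (((rep n c).toNat : ℕ) : ℤ) = rep n c := by omega
    calc (((rep n c).toNat : ℕ) : ZMod n) = (((((rep n c).toNat : ℕ) : ℤ)) : ZMod n) := by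
          push_cast; rfl
    _ = ((rep n c : ℤ) : ZMod n) := by rw [this]
    _ = c := cast_rep c


/-- **Combinatorial content of Adachi, Corollary 2.15.** The map
`X ↦ top(X)` restricts to a bijection from
`𝒮(n) = {X ∈ 𝒯(n) : the projective arc at the residue class of n lies in X}`
onto `𝒴(n) = {a ∈ 𝒵(n) : a'_i ≤ 0 for all i ∈ {1, …, n}}`. -/
theorem top_bijOn_S (n : ℕ) (hn : 0 < n) :
    Set.BijOn (topSeq n)
      {X : Set (Arc n) | IsTriangulation n X ∧ Arc.proj ((n : ℕ) : ZMod n) ∈ X}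
      {a : ZMod n → ℕ | (∑ p ∈ Finset.Icc 1 n, a ((p : ℕ) : ZMod n) = n) ∧
        ∀ i ∈ Finset.Icc 1 n, psum n a (i : ℤ) ≤ 0} := by
  haveI : NeZero n := ⟨hn.ne'⟩
  have hcore := core_bij (n + 1) (-1) (n : ℤ) (by push_cast; ring) (by omega)
  have h1 : Set.BijOn (fun X : Set (Arc n) => toChord n '' X)
      {X : Set (Arc n) | IsTriangulation n X ∧ Arc.proj ((n : ℕ) : ZMod n) ∈ X}
      {T : Set (ℤ × ℤ) | MaxNC (-1) (n : ℤ) T} := by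
    refine ⟨?_, ?_, ?_⟩
    · rintro X ⟨hX, hproj⟩
      exact S_to_MaxNC hX hproj
    · intro X _ X' _ h
      exact Set.image_injective.mpr toChord_inj h
    · intro T hT
      obtain ⟨htri, hproj, himg⟩ := MaxNC_to_S hT
      exact ⟨fromChord n '' T, ⟨htri, hproj⟩, himg⟩
  have h3 := reindex_bij (n := n) hn
  have hcomp := (h3.comp hcore).comp h1
  apply Set.BijOn.congr hcomp
  intro X hX
  obtain ⟨hXt, hXp⟩ := hX
  have hw : ∀ a ∈ X, Window n a := fun a ha => ⟨hXt.1.1 a ha, hXt.1.2 a ha _ hXp⟩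
  funext c
  exact (top_eq hw c).symm

end Punctured
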